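/- For channels D_{C^{(1)}}, D_{C^{(2)}} given by Schur products with correlation matrices C^{(1)}, C^{(2)}, and any channel E, the Jamiołkowski matrix of the composition satisfies J(D_{C^{(2)}} ∘ E ∘ D_{C^{(1)}}) = J(E) ∘ (C^{(2)} ⊗ C^{(1)}). -/

import Mathlib

/-! `D_C(|k⟩⟨l|) = C k l • |k⟩⟨l|`, so pre-processing by `D_C` multiplies the input block `(k, l)`
of the Jamiołkowski matrix by `C k l`, while post-processing multiplies its output entry `(i, j)`
by `C i j`. Hence `J(D_{C²} ∘ E ∘ D_{C¹}) = J(E) ∘ (C² ⊗ 𝟙) ∘ (𝟙 ⊗ C¹)` with `𝟙 = of 1` the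
all-ones matrix, and `(C² ⊗ 𝟙) ∘ (𝟙 ⊗ C¹) = C² ⊗ C¹`. -/

open Matrix
open scoped Kronecker ComplexOrder

noncomputable section

/-- The Schur-product (Hadamard-product) superoperator `X ↦ X ∘ C`. -/
def schurMap {d : ℕ} (C : Matrix (Fin d) (Fin d) ℂ) :
    Matrix (Fin d) (Fin d) ℂ →ₗ[ℂ] Matrix (Fin d) (Fin d) ℂ where
  toFun X := X.hadamard C
  map_add' X Y := by ext i j; simp [Matrix.hadamard]; ring
  map_smul' c X := by ext i j; simp [Matrix.hadamard]; ring

/-- The extension `E ⊗ I_n` of a superoperator, applied to a bipartite matrix. -/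
def tensExt {d : ℕ} (E : Matrix (Fin d) (Fin d) ℂ →ₗ[ℂ] Matrix (Fin d) (Fin d) ℂ) (n : ℕ)
    (ρ : Matrix (Fin d × Fin n) (Fin d × Fin n) ℂ) :
    Matrix (Fin d × Fin n) (Fin d × Fin n) ℂ :=
  Matrix.of fun p q => ∑ i, ∑ j, (E (single i j 1)) p.1 q.1 * ρ (i, p.2) (j, q.2)

/-- Complete positivity: every extension `E ⊗ I_n` preserves positive semidefiniteness. -/
def IsCP {d : ℕ} (E : Matrix (Fin d) (Fin d) ℂ →ₗ[ℂ] Matrix (Fin d) (Fin d) ℂ) : Prop :=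
  ∀ (n : ℕ) (ρ : Matrix (Fin d × Fin n) (Fin d × Fin n) ℂ),
    ρ.PosSemidef → (tensExt E n ρ).PosSemidef

/-- Trace preservation. -/
def IsTP {d : ℕ} (E : Matrix (Fin d) (Fin d) ℂ →ₗ[ℂ] Matrix (Fin d) (Fin d) ℂ) : Prop :=
  ∀ X, (E X).trace = X.trace

/-- Quantum channel: completely positive and trace-preserving. -/
def IsCPTP {d : ℕ} (E : Matrix (Fin d) (Fin d) ℂ →ₗ[ℂ] Matrix (Fin d) (Fin d) ℂ) : Prop :=
  IsCP E ∧ IsTP E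

/-- The Jamiołkowski matrix `J(E) = (E ⊗ I)(|Ψ⟩⟨Ψ|)`, with entries
`J(E)_{(i,k),(j,l)} = E(|k⟩⟨l|)_{i j} / d`. -/
def jam {d : ℕ} (E : Matrix (Fin d) (Fin d) ℂ →ₗ[ℂ] Matrix (Fin d) (Fin d) ℂ) :
    Matrix (Fin d × Fin d) (Fin d × Fin d) ℂ :=
  Matrix.of fun p q => (E (single p.2 q.2 1)) p.1 q.1 / d

/-- Controlled unitary `U = Σ_i |i⟩⟨i| ⊗ U_i`. -/
def ctrl {d n : ℕ} (Us : Fin d → Matrix (Fin n) (Fin n) ℂ) :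
    Matrix (Fin d × Fin n) (Fin d × Fin n) ℂ :=
  Matrix.of fun p q => (if p.1 = q.1 then (1 : ℂ) else 0) * (Us p.1) p.2 q.2

theorem Matrix.single_hadamard {m n α : Type*} [DecidableEq m] [DecidableEq n] [MulZeroClass α]
    (i : m) (j : n) (a : α) (A : Matrix m n α) :
    single i j a ⊙ A = single i j (a * A i j) := by
  ext i' j'
  by_cases h : i = i' ∧ j = j'
  · obtain ⟨rfl, rfl⟩ := h
    simp
  · simp [h]

theorem schurMap_apply {d : ℕ} (C X : Matrix (Fin d) (Fin d) ℂ) : schurMap C X = X ⊙ C := rfl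

theorem schurMap_single_one {d : ℕ} (C : Matrix (Fin d) (Fin d) ℂ) (k l : Fin d) :
    schurMap C (single k l 1) = C k l • single k l 1 := by
  rw [schurMap_apply, single_hadamard, one_mul, smul_single, smul_eq_mul, mul_one]

theorem jam_schurMap_comp {d : ℕ} (C : Matrix (Fin d) (Fin d) ℂ)
    (E : Matrix (Fin d) (Fin d) ℂ →ₗ[ℂ] Matrix (Fin d) (Fin d) ℂ) :
    jam (schurMap C ∘ₗ E) = jam E ⊙ (C ⊗ₖ of 1) := by
  ext ⟨i, k⟩ ⟨j, l⟩
  simp only [jam, LinearMap.comp_apply, schurMap_apply, of_apply, hadamard_apply,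
    kroneckerMap_apply, Pi.one_apply]
  ring

theorem jam_comp_schurMap {d : ℕ} (E : Matrix (Fin d) (Fin d) ℂ →ₗ[ℂ] Matrix (Fin d) (Fin d) ℂ)
    (C : Matrix (Fin d) (Fin d) ℂ) :
    jam (E ∘ₗ schurMap C) = jam E ⊙ (of 1 ⊗ₖ C) := by
  ext ⟨i, k⟩ ⟨j, l⟩
  simp only [jam, LinearMap.comp_apply, schurMap_single_one, map_smul, of_apply,
    Matrix.smul_apply, smul_eq_mul, hadamard_apply, kroneckerMap_apply, Pi.one_apply]
  ring

theorem stmt19_general (d : ℕ) (C1 C2 : Matrix (Fin d) (Fin d) ℂ)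
    (E : Matrix (Fin d) (Fin d) ℂ →ₗ[ℂ] Matrix (Fin d) (Fin d) ℂ) :
    jam (schurMap C2 ∘ₗ E ∘ₗ schurMap C1) = (jam E).hadamard (C2 ⊗ₖ C1) := by
  rw [jam_schurMap_comp, jam_comp_schurMap, hadamard_assoc, kronecker_hadamard_kronecker,
    of_one_hadamard, hadamard_of_one]

/-- pre- and post-processing by Schur-product channels acts on the
Jamiołkowski matrix by the Schur product with the Kronecker product:
`J(D_{C²} ∘ E ∘ D_{C¹}) = J(E) ∘ (C² ⊗ C¹)`. -/
theorem stmt19 (d : ℕ) (C1 C2 : Matrix (Fin d) (Fin d) ℂ)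
    (hC1 : C1.PosSemidef) (hC1diag : ∀ i, C1 i i = 1)
    (hC2 : C2.PosSemidef) (hC2diag : ∀ i, C2 i i = 1)
    (E : Matrix (Fin d) (Fin d) ℂ →ₗ[ℂ] Matrix (Fin d) (Fin d) ℂ) (hE : IsCPTP E) :
    jam (schurMap C2 ∘ₗ E ∘ₗ schurMap C1) = (jam E).hadamard (C2 ⊗ₖ C1) :=
  stmt19_general d C1 C2 E

end
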